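/- arXiv:2109.05369 — 5 statements merged into one kernel-verified Lean document; each statement's English description precedes it below -/
import Mathlib

section
/- Consider shuffles of the words l₁…l_k and r₁…r_{k'} (order-preserving interleavings, i.e., words of length k+k' over the alphabet {l₁,…,l_k, r₁,…,r_{k'}} containing each letter once, with the l-letters in increasing order and the r-letters in increasing order). For a shuffle w, define λ_w(i) to be the position of letter l_i in w. Consider the rewriting step that replaces a factor l_i r_j by r_j l_i. Then there is a sequence of such steps from shuffle w to shuffle w' if and only if λ_w(i) ≤ λ_{w'}(i) for all i ∈ {1,…,k}. -/
/-!
A step moves one letter `l_i` one position to the right, so positions can only grow along a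
path. Conversely, if `f ≤ g` pointwise and `f ≠ g`, let `i` be the last index with
`f i < g i`. The position `f i + 1` is free in `f`: letters before `l_i` sit to its left, and a
later letter `l_j` sits at `g j > g i ≥ f i + 1`. Moving `l_i` there is a step that keeps
`f ≤ g` and decreases `∑ i, (g i - f i)`.
-/

/-- A shuffle of `l₁…l_k` and `r₁…r_{k'}` is encoded by the strictly monotone
function sending `i` to the position of the letter `l_i`; positions not in the
image carry the `r`-letters in order.  A swap step replaces a factor `l_i r_j`
by `r_j l_i`, i.e. moves the position of `l_i` one step to the right, provided
the next position is an `r`-position. -/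
def ShuffleStep (k k' : ℕ) (f g : Fin k → Fin (k + k')) : Prop :=
  ∃ i : Fin k, ((g i : ℕ) = (f i : ℕ) + 1) ∧ (∀ j, f j ≠ g i) ∧
    ∀ j, j ≠ i → g j = f j

namespace ShuffleStep

variable {k k' : ℕ} {f f' g : Fin k → Fin (k + k')}

theorem le (h : ShuffleStep k k' f f') : f ≤ f' := by
  obtain ⟨i, hi, -, hfix⟩ := h
  intro j
  rcases eq_or_ne j i with rfl | hj
  · exact Fin.le_def.mpr (by omega)
  · exact (hfix j hj).ge

theorem le_of_reflTransGen (h : Relation.ReflTransGen (ShuffleStep k k') f g) : f ≤ g := by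
  have := Relation.ReflTransGen.mono (p := (· ≤ ·)) (fun _ _ => le) _ _ h
  rwa [Relation.reflTransGen_eq_self] at this

theorem strictMono (h : ShuffleStep k k' f f') (hf : StrictMono f) : StrictMono f' := by
  obtain ⟨i, hi, hfree, hfix⟩ := h
  have hval : ∀ j, j ≠ i → (f' j : ℕ) = f j := fun j hj => congrArg Fin.val (hfix j hj)
  intro a b hab
  have hfab : (f a : ℕ) < f b := hf hab
  rw [Fin.lt_def]
  rcases eq_or_ne a i with rfl | ha
  · have hb := hval b hab.ne'
    have : (f b : ℕ) ≠ f' a := Fin.val_ne_of_ne (hfree b)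
    omega
  · rcases eq_or_ne b i with rfl | hb
    · have := hval a ha
      omega
    · rw [hval a ha, hval b hb]
      exact hfab

theorem sum_sub_lt (h : ShuffleStep k k' f f') (hle : f' ≤ g) :
    ∑ i, ((g i : ℕ) - f' i) < ∑ i, ((g i : ℕ) - f i) := by
  have hff' := h.le
  obtain ⟨i, hi, -, -⟩ := h
  refine Finset.sum_lt_sum (fun j _ => ?_) ⟨i, Finset.mem_univ i, ?_⟩
  · exact Nat.sub_le_sub_left (Fin.le_def.mp (hff' j)) _
  · have := Fin.le_def.mp (hle i)
    omega

theorem exists_le_of_le_of_ne (hf : StrictMono f) (hg : StrictMono g) (hle : f ≤ g)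
    (hne : f ≠ g) : ∃ f', ShuffleStep k k' f f' ∧ f' ≤ g := by
  obtain ⟨i, hi, hmax⟩ := Finset.exists_max_image (Finset.univ.filter fun j => f j ≠ g j) id
    (by simpa [Finset.filter_nonempty_iff] using Function.ne_iff.mp hne)
  have hlt : (f i : ℕ) < g i := lt_of_le_of_ne (hle i) (Fin.val_ne_of_ne (by simpa using hi))
  have hlast : ∀ j, i < j → f j = g j := fun j hij => by
    by_contra hj
    exact (hmax j (by simpa using hj)).not_gt hij
  have hfree : ∀ j, (f j : ℕ) ≠ f i + 1 := fun j => by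
    rcases le_or_gt j i with hji | hij
    · have : (f j : ℕ) ≤ f i := hf.monotone hji
      omega
    · have : (g i : ℕ) < f j := hlast j hij ▸ hg hij
      omega
  refine ⟨Function.update f i ⟨f i + 1, by omega⟩,
    ⟨i, by simp, fun j => by simpa [Fin.ext_iff] using hfree j,
      fun j hj => Function.update_of_ne hj _ _⟩, fun j => ?_⟩
  rcases eq_or_ne j i with rfl | hj
  · simpa [Fin.le_def] using hlt
  · simpa [Function.update_of_ne hj] using hle j

end ShuffleStep

theorem ShuffleStep.reflTransGen_of_le {k k' : ℕ} {f g : Fin k → Fin (k + k')}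
    (hf : StrictMono f) (hg : StrictMono g) (hle : f ≤ g) :
    Relation.ReflTransGen (ShuffleStep k k') f g := by
  by_cases hfg : f = g
  · exact hfg ▸ .refl
  obtain ⟨f', hstep, hle'⟩ := exists_le_of_le_of_ne hf hg hle hfg
  have := hstep.sum_sub_lt hle'
  exact .head hstep (reflTransGen_of_le (hstep.strictMono hf) hg hle')
termination_by ∑ i, ((g i : ℕ) - f i)

/-- Path-existence criterion in the shuffle graph: there is a sequence of swap
steps from `w` to `w'` iff the position of each `l_i` in `w` is at most its
position in `w'`. -/
theorem stmt_8 (k k' : ℕ) (f g : Fin k → Fin (k + k'))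
    (hf : StrictMono f) (hg : StrictMono g) :
    Relation.ReflTransGen (ShuffleStep k k') f g ↔ ∀ i, f i ≤ g i :=
  ⟨ShuffleStep.le_of_reflTransGen, ShuffleStep.reflTransGen_of_le hf hg⟩
end

section
/- Let G be the graph whose vertices are shuffles of l₁…l_k and r₁…r_{k'} and whose edges are the adjacent swaps l_i r_j → r_j l_i. Let ≈ be a congruence on paths of G (an equivalence relation on parallel paths, compatible with concatenation and reflexive on edges) such that for any two disjoint swaps applied to the same word, the two orders of applying them yield ≈-equivalent paths (i.e., for words u₁ l_i r_j u₂ l_{i'} r_{j'} u₃, swapping at the first position then the second is ≈-equivalent to swapping at the second then the first). Then any two parallel paths p₁, p₂ : v → w in the free category on G are ≈-equivalent. -/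
open Quiver

instance shuffleQuiver (k k' : ℕ) : Quiver (Fin k → Fin (k + k')) :=
  ⟨fun f g => PLift (ShuffleStep k k' f g)⟩

namespace Stmt10Aux

variable {k k' : ℕ}

/-- weight of a vertex -/
def W (f : Fin k → Fin (k + k')) : ℕ := ∑ j, (f j : ℕ)

lemma step_W {f g : Fin k → Fin (k + k')} (h : ShuffleStep k k' f g) : W g = W f + 1 := by
  obtain ⟨i, hgi, -, hj⟩ := h
  unfold W
  rw [← Finset.sum_erase_add _ _ (Finset.mem_univ i),
      ← Finset.sum_erase_add _ (fun j => ((f j : ℕ))) (Finset.mem_univ i)]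
  have hs : ∑ x ∈ Finset.univ.erase i, (g x : ℕ) = ∑ x ∈ Finset.univ.erase i, (f x : ℕ) :=
    Finset.sum_congr rfl fun x hx => by rw [hj x (Finset.ne_of_mem_erase hx)]
  omega

lemma path_W {a b : Fin k → Fin (k + k')} (p : Quiver.Path a b) : W b = W a + p.length := by
  induction p with
  | nil => simp
  | cons p e ih =>
    have := step_W e.down
    simp only [Quiver.Path.length_cons]
    omega

/-- domination relation: the invariants that hold between a vertex and anything
reachable from it. -/
def Rrel (d b : Fin k → Fin (k + k')) : Prop :=
  (∀ j, (d j : ℕ) ≤ b j) ∧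
  (∀ m n : Fin k, (d m : ℕ) < d n → (b m : ℕ) < b n) ∧
  (∀ m n : Fin k, m ≠ n → (d m : ℕ) = d n → (b m : ℕ) = b n → (d m : ℕ) = b m)

lemma Rrel_refl (b : Fin k → Fin (k + k')) : Rrel b b :=
  ⟨fun _ => le_rfl, fun _ _ h => h, fun _ _ _ _ _ => rfl⟩

lemma Rrel_trans {c x b : Fin k → Fin (k + k')} (h1 : Rrel c x) (h2 : Rrel x b) : Rrel c b := by
  obtain ⟨a1, a2, a3⟩ := h1
  obtain ⟨b1, b2, b3⟩ := h2
  refine ⟨fun j => le_trans (a1 j) (b1 j), fun m n h => b2 m n (a2 m n h), ?_⟩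
  intro m n hmn hd hb
  rcases lt_trichotomy ((x m : ℕ)) ((x n : ℕ)) with h | h | h
  · exact absurd (b2 m n h) (by omega)
  · have hx : (x m : ℕ) = b m := b3 m n hmn h hb
    have : (c m : ℕ) = x m := a3 m n hmn hd (by omega)
    omega
  · exact absurd (b2 n m h) (by omega)

lemma Rrel_step {c d b : Fin k → Fin (k + k')} (h : ShuffleStep k k' c d) (hR : Rrel d b) :
    Rrel c b := by
  obtain ⟨i, hgi, hnr, hj⟩ := h
  obtain ⟨R1, R2, R3⟩ := hR
  have hcd : ∀ j, j ≠ i → (d j : ℕ) = c j := fun j hji => by rw [hj j hji]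
  refine ⟨?_, ?_, ?_⟩
  · intro j
    by_cases hji : j = i
    · rw [hji]; have := R1 i; omega
    · have := hcd j hji; have := R1 j; omega
  · intro m n h
    by_cases hmi : m = i
    · rw [hmi] at h ⊢
      have hni : n ≠ i := by intro he; rw [he] at h; omega
      have h2 : (d n : ℕ) = c n := hcd n hni
      have hle : (d i : ℕ) ≤ d n := by omega
      rcases lt_or_eq_of_le hle with hlt | heq
      · exact R2 i n hlt
      · exfalso
        exact hnr n (Fin.ext (show ((c n : ℕ)) = (d i : ℕ) by omega))
    · by_cases hni : n = i
      · rw [hni] at h ⊢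
        have := hcd m hmi
        exact R2 m i (by omega)
      · have := hcd m hmi; have := hcd n hni
        exact R2 m n (by omega)
  · intro m n hmn hd0 hb0
    by_cases hmi : m = i
    · rw [hmi] at hd0 hb0 ⊢
      have hni : n ≠ i := fun h => hmn (by rw [hmi, h])
      have h2 : (d n : ℕ) = c n := hcd n hni
      have := R2 n i (by omega)
      omega
    · by_cases hni : n = i
      · rw [hni] at hd0 hb0
        have h2 : (d m : ℕ) = c m := hcd m hmi
        have := R2 m i (by omega)
        omega
      · have h1 := hcd m hmi; have h2 := hcd n hni
        have := R3 m n hmn (by omega) hb0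
        omega

lemma Rrel_of_path {c b : Fin k → Fin (k + k')} (p : Quiver.Path c b) : Rrel c b := by
  induction p with
  | nil => exact Rrel_refl _
  | cons p e ih => exact Rrel_trans ih (Rrel_step e.down (Rrel_refl _))

lemma reach : ∀ (N : ℕ) (d b : Fin k → Fin (k + k')),
    (∑ j, ((b j : ℕ) - (d j : ℕ))) = N → Rrel d b → Nonempty (Quiver.Path d b) := by
  intro N
  induction N with
  | zero =>
    intro d b hm hR
    have hdb : d = b := by
      funext j
      have h0 : (b j : ℕ) - (d j : ℕ) = 0 :=
        Finset.sum_eq_zero_iff.mp hm j (Finset.mem_univ j)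
      have := hR.1 j
      exact Fin.ext (by omega)
    subst hdb
    exact ⟨Quiver.Path.nil⟩
  | succ N ih =>
    intro d b hm hR
    obtain ⟨R1, R2, R3⟩ := hR
    have hne : ∃ j, (d j : ℕ) < b j := by
      by_contra hc
      push_neg at hc
      have : ∑ j, ((b j : ℕ) - (d j : ℕ)) = 0 :=
        Finset.sum_eq_zero fun j _ => by have := hc j; omega
      omega
    set s : Finset (Fin k) := Finset.univ.filter (fun j => (d j : ℕ) < b j) with hs
    have hsne : s.Nonempty := by
      obtain ⟨j, hj⟩ := hne
      exact ⟨j, Finset.mem_filter.mpr ⟨Finset.mem_univ _, hj⟩⟩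
    obtain ⟨j, hjs, hjmax⟩ :=
      Finset.exists_max_image s (fun j => (d j : ℕ) * (k + k') + (b j : ℕ)) hsne
    have hjlt : (d j : ℕ) < b j := (Finset.mem_filter.mp hjs).2
    have hmax : ∀ m, (d m : ℕ) < b m →
        ((d m : ℕ) < d j ∨ ((d m : ℕ) = d j ∧ (b m : ℕ) ≤ b j)) := by
      intro m hmlt
      have hms : m ∈ s := Finset.mem_filter.mpr ⟨Finset.mem_univ _, hmlt⟩
      have := hjmax m hms
      have h1 : (b m : ℕ) < k + k' := (b m).isLt
      have h2 : (b j : ℕ) < k + k' := (b j).isLt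
      rcases lt_trichotomy ((d m : ℕ)) ((d j : ℕ)) with h | h | h
      · exact Or.inl h
      · exact Or.inr ⟨h, by nlinarith⟩
      · exfalso; nlinarith
    have hfree : ∀ m, (d m : ℕ) ≠ d j + 1 := by
      intro m hme
      by_cases hmb : (d m : ℕ) < b m
      · rcases hmax m hmb with h | ⟨h, -⟩ <;> omega
      · have h1 := R1 m
        have := R2 j m (by omega)
        omega
    have hjb : (d j : ℕ) + 1 < k + k' := lt_of_le_of_lt (by omega) (b j).isLt
    set d' : Fin k → Fin (k + k') := Function.update d j ⟨(d j : ℕ) + 1, hjb⟩ with hd'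
    have hd'j : (d' j : ℕ) = (d j : ℕ) + 1 := by simp [hd']
    have hd'm : ∀ m, m ≠ j → d' m = d m := fun m hmj => Function.update_of_ne hmj _ _
    have hd'mv : ∀ m, m ≠ j → (d' m : ℕ) = d m := fun m hmj => by rw [hd'm m hmj]
    have hstep : ShuffleStep k k' d d' := by
      refine ⟨j, hd'j, ?_, hd'm⟩
      intro m hme
      exact hfree m (by rw [hme, hd'j])
    have hR' : Rrel d' b := by
      refine ⟨?_, ?_, ?_⟩
      · intro m
        by_cases hmj : m = j
        · rw [hmj]; omega
        · have := hd'mv m hmj; have := R1 m; omega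
      · intro m n h
        by_cases hmj : m = j
        · rw [hmj] at h ⊢
          have hnj : n ≠ j := by intro he; rw [he] at h; omega
          have := hd'mv n hnj
          exact R2 j n (by omega)
        · have hm' := hd'mv m hmj
          by_cases hnj : n = j
          · rw [hnj] at h ⊢
            have hle : (d m : ℕ) ≤ d j := by omega
            rcases lt_or_eq_of_le hle with hlt | heq
            · exact R2 m j hlt
            · by_cases hmb : (d m : ℕ) < b m
              · rcases hmax m hmb with h' | ⟨-, h'⟩
                · omega
                · rcases lt_or_eq_of_le h' with h'' | h''
                  · exact h''
                  · exact absurd (R3 m j hmj heq h'') (by omega)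
              · have := R1 m; omega
          · have := hd'mv n hnj
            exact R2 m n (by omega)
      · intro m n hmn hd0 hb0
        by_cases hmj : m = j
        · rw [hmj] at hd0 hb0 ⊢
          have hnj : n ≠ j := fun h => hmn (by rw [hmj, h])
          have := hd'mv n hnj
          exact absurd (show (d n : ℕ) = d j + 1 by omega) (hfree n)
        · have hm' := hd'mv m hmj
          by_cases hnj : n = j
          · rw [hnj] at hd0
            exact absurd (show (d m : ℕ) = d j + 1 by omega) (hfree m)
          · have hn' := hd'mv n hnj
            have := R3 m n hmn (by omega) hb0
            omega
    have hm' : (∑ x, ((b x : ℕ) - (d' x : ℕ))) = N := by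
      rw [← Finset.sum_erase_add _ _ (Finset.mem_univ j)] at hm ⊢
      have heq : ∑ x ∈ Finset.univ.erase j, ((b x : ℕ) - (d' x : ℕ)) =
          ∑ x ∈ Finset.univ.erase j, ((b x : ℕ) - (d x : ℕ)) :=
        Finset.sum_congr rfl fun x hx => by rw [hd'm x (Finset.ne_of_mem_erase hx)]
      rw [heq]
      omega
    obtain ⟨r⟩ := ih d' b hm' hR'
    exact ⟨(Quiver.Path.nil.cons (PLift.up hstep)).comp r⟩

lemma decomp {a b : Fin k → Fin (k + k')} (p : Quiver.Path a b) :
    p.length ≠ 0 → ∃ c, ∃ e : a ⟶ c, ∃ p' : Quiver.Path c b,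
      p = (Quiver.Path.nil.cons e).comp p' := by
  induction p with
  | nil => intro h; simp at h
  | cons p e ih =>
    intro _
    by_cases h0 : p.length = 0
    · cases p with
      | nil => exact ⟨_, e, Quiver.Path.nil, rfl⟩
      | cons p' e' => simp at h0
    · obtain ⟨c, e₀, p', hp⟩ := ih h0
      exact ⟨c, e₀, p'.cons e, by rw [hp]; rfl⟩

/-- diamond completion -/
lemma diamond {a c c' b : Fin k → Fin (k + k')}
    (h1 : ShuffleStep k k' a c) (h2 : ShuffleStep k k' a c') (hcc : c ≠ c')
    (Rc : Rrel c b) (Rc' : Rrel c' b) :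
    ∃ d, ShuffleStep k k' c d ∧ ShuffleStep k k' c' d ∧ Rrel d b := by
  obtain ⟨i₁, g1, nr1, u1⟩ := h1
  obtain ⟨i₂, g2, nr2, u2⟩ := h2
  have hii : i₁ ≠ i₂ := by
    intro he
    apply hcc
    funext m
    by_cases hm : m = i₁
    · rw [hm]; refine Fin.ext ?_; rw [← he] at g2; omega
    · rw [u1 m hm, u2 m (by rw [← he]; exact hm)]
  have hci₂ : (c i₂ : ℕ) = a i₂ := by rw [u1 i₂ (Ne.symm hii)]
  have hc'i₁ : (c' i₁ : ℕ) = a i₁ := by rw [u2 i₁ hii]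
  have hva : (a i₁ : ℕ) ≠ a i₂ := by
    intro he
    have hb1 : (b i₂ : ℕ) < b i₁ := Rc.2.1 i₂ i₁ (by omega)
    have hb2 : (b i₁ : ℕ) < b i₂ := Rc'.2.1 i₁ i₂ (by omega)
    omega
  set d : Fin k → Fin (k + k') := Function.update c i₂ (c' i₂) with hd
  have hdi₂ : d i₂ = c' i₂ := by simp [hd]
  have hdm : ∀ m, m ≠ i₂ → d m = c m := fun m hm => Function.update_of_ne hm _ _
  have hdi₁ : d i₁ = c i₁ := hdm i₁ hii
  -- value tables (over ℕ)
  have vc : ∀ m, m ≠ i₁ → (c m : ℕ) = a m := fun m hm => by rw [u1 m hm]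
  have vc' : ∀ m, m ≠ i₂ → (c' m : ℕ) = a m := fun m hm => by rw [u2 m hm]
  have vd1 : (d i₁ : ℕ) = (a i₁ : ℕ) + 1 := by rw [hdi₁]; omega
  have vd2 : (d i₂ : ℕ) = (a i₂ : ℕ) + 1 := by rw [hdi₂]; omega
  have vdm : ∀ m, m ≠ i₁ → m ≠ i₂ → (d m : ℕ) = a m := fun m hm1 hm2 => by
    rw [hdm m hm2]; exact vc m hm1
  -- d agrees with c off i₂, with c' off i₁
  have hdc : ∀ m, m ≠ i₂ → (d m : ℕ) = c m := fun m hm => by rw [hdm m hm]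
  have hdc' : ∀ m, m ≠ i₁ → (d m : ℕ) = c' m := by
    intro m hm
    by_cases hm2 : m = i₂
    · rw [hm2, hdi₂]
    · rw [hdm m hm2, u1 m hm, u2 m hm2]
  have s1 : ShuffleStep k k' c d := by
    refine ⟨i₂, by omega, ?_, hdm⟩
    intro m hme
    have hme' : (c m : ℕ) = (a i₂ : ℕ) + 1 := by rw [hme]; omega
    by_cases hmi : m = i₁
    · rw [hmi] at hme'; omega
    · rw [vc m hmi] at hme'
      exact nr2 m (Fin.ext (by omega))
  have s2 : ShuffleStep k k' c' d := by
    refine ⟨i₁, by omega, ?_, fun m hm => Fin.ext (by have := hdc' m hm; omega)⟩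
    · intro m hme
      have hme' : (c' m : ℕ) = (a i₁ : ℕ) + 1 := by rw [hme]; omega
      by_cases hmi : m = i₂
      · rw [hmi] at hme'; omega
      · rw [vc' m hmi] at hme'
        exact nr1 m (Fin.ext (by omega))
  have Rd : Rrel d b := by
    refine ⟨?_, ?_, ?_⟩
    · intro m
      by_cases hmi : m = i₂
      · rw [hmi]; have := Rc'.1 i₂; omega
      · have := hdc m hmi; have := Rc.1 m; omega
    · intro m n h
      by_cases hm2 : m = i₂ <;> by_cases hn2 : n = i₂
      · rw [hm2, hn2] at h; omega
      · -- m = i₂, n ≠ i₂ : use Rc'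
        have hn1 : n ≠ i₁ ∨ n = i₁ := (ne_or_eq n i₁)
        rcases hn1 with hn1 | hn1
        · refine Rc'.2.1 m n ?_
          have := hdc' m (by rw [hm2]; exact Ne.symm hii)
          have := hdc' n hn1
          omega
        · -- n = i₁ : d m = a i₂+1 < d n = a i₁+1 ; use Rc : c i₂ = a i₂ < a i₁+1 = c i₁
          refine Rc.2.1 m n ?_
          rw [hm2, hn1] at h ⊢
          omega
      · -- n = i₂, m ≠ i₂ : use Rc'
        refine Rc'.2.1 m n ?_
        have := hdc' n (by rw [hn2]; exact Ne.symm hii)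
        by_cases hm1 : m = i₁
        · rw [hm1] at h ⊢; omega
        · have := hdc' m hm1; omega
      · -- neither is i₂ : use Rc
        exact Rc.2.1 m n (by rw [← hdc m hm2, ← hdc n hn2]; exact h)
    · intro m n hmn hd0 hb0
      by_cases hm2 : m = i₂ <;> by_cases hn2 : n = i₂
      · exact absurd (hm2.trans hn2.symm) hmn
      · by_cases hn1 : n = i₁
        · rw [hm2, hn1] at hd0; omega
        · have h1 := hdc' m (by rw [hm2]; exact Ne.symm hii)
          have h2 := hdc' n hn1
          have := Rc'.2.2 m n hmn (by omega) hb0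
          omega
      · by_cases hm1 : m = i₁
        · rw [hm1, hn2] at hd0; omega
        · have h1 := hdc' m hm1
          have h2 := hdc' n (by rw [hn2]; exact Ne.symm hii)
          have := Rc'.2.2 m n hmn (by omega) hb0
          omega
      · have h1 := hdc m hm2
        have h2 := hdc n hn2
        have := Rc.2.2 m n hmn (by omega) hb0
        omega
  exact ⟨d, s1, s2, Rd⟩

end Stmt10Aux

/-- Coherence of the shuffle graph: if `≈` is a congruence on parallel paths
(an equivalence compatible with pre- and post-composition) such that the two
orders of applying two disjoint swaps yield equivalent paths, then any two
parallel paths are equivalent. -/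
theorem stmt_10 (k k' : ℕ)
    (E : ∀ {a b : Fin k → Fin (k + k')}, Quiver.Path a b → Quiver.Path a b → Prop)
    (hrefl : ∀ {a b : Fin k → Fin (k + k')} (p : Quiver.Path a b), E p p)
    (hsymm : ∀ {a b : Fin k → Fin (k + k')} (p q : Quiver.Path a b), E p q → E q p)
    (htrans : ∀ {a b : Fin k → Fin (k + k')} (p q s : Quiver.Path a b),
      E p q → E q s → E p s)
    (hpost : ∀ {a b c : Fin k → Fin (k + k')} (p q : Quiver.Path a b) (s : Quiver.Path b c),
      E p q → E (p.comp s) (q.comp s))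
    (hpre : ∀ {z a b : Fin k → Fin (k + k')} (s : Quiver.Path z a) (p q : Quiver.Path a b),
      E p q → E (s.comp p) (s.comp q))
    (hdiamond : ∀ (a b₁ b₂ d : Fin k → Fin (k + k'))
      (e₁ : a ⟶ b₁) (e₂ : a ⟶ b₂) (e₁' : b₁ ⟶ d) (e₂' : b₂ ⟶ d),
      b₁ ≠ b₂ →
      E ((Quiver.Path.nil.cons e₁).cons e₁') ((Quiver.Path.nil.cons e₂).cons e₂')) :
    ∀ (a b : Fin k → Fin (k + k')) (p q : Quiver.Path a b), E p q := by
  have main : ∀ (n : ℕ) (a b : Fin k → Fin (k + k')) (p q : Quiver.Path a b),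
      p.length = n → E p q := by
    intro n
    induction n with
    | zero =>
      intro a b p q hp
      cases p with
      | nil =>
        cases q with
        | nil => exact hrefl _
        | cons q' e =>
          exfalso
          have := Stmt10Aux.path_W (q'.cons e)
          simp [Quiver.Path.length_cons] at this
      | cons p' e => simp at hp
    | succ n ih =>
      intro a b p q hp
      have hWp := Stmt10Aux.path_W p
      have hWq := Stmt10Aux.path_W q
      have hq : q.length = n + 1 := by omega
      obtain ⟨c, e₁, p', hp'⟩ := Stmt10Aux.decomp p (by omega)
      obtain ⟨c', e₂, q', hq'⟩ := Stmt10Aux.decomp q (by omega)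
      have hlp' : p'.length = n := by
        rw [hp'] at hp; rw [Quiver.Path.length_comp] at hp; simp at hp; omega
      have hlq' : q'.length = n := by
        rw [hq'] at hq; rw [Quiver.Path.length_comp] at hq; simp at hq; omega
      by_cases hcc : c = c'
      · subst hcc
        have he : e₁ = e₂ := by change PLift _ at e₁ e₂; cases e₁; cases e₂; rfl
        subst he
        rw [hp', hq']
        exact hpre _ p' q' (ih c b p' q' hlp')
      · have R₁ : Stmt10Aux.Rrel c b := Stmt10Aux.Rrel_of_path p'
        have R₂ : Stmt10Aux.Rrel c' b := Stmt10Aux.Rrel_of_path q'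
        obtain ⟨d, s₁, s₂, Rd⟩ := Stmt10Aux.diamond e₁.down e₂.down hcc R₁ R₂
        obtain ⟨r⟩ := Stmt10Aux.reach _ d b rfl Rd
        set g₁ : c ⟶ d := PLift.up s₁ with hg₁
        set g₂ : c' ⟶ d := PLift.up s₂ with hg₂
        have hd := hdiamond a c c' d e₁ e₂ g₁ g₂ hcc
        have h1 : E p' ((Quiver.Path.nil.cons g₁).comp r) := ih c b p' _ hlp'
        have h2 : E ((Quiver.Path.nil.cons g₂).comp r) q' :=
          hsymm _ _ (ih c' b q' _ hlq')
        have assoc₁ : (Quiver.Path.nil.cons e₁).comp ((Quiver.Path.nil.cons g₁).comp r)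
            = ((Quiver.Path.nil.cons e₁).cons g₁).comp r := by
          rw [← Quiver.Path.comp_assoc]; rfl
        have assoc₂ : (Quiver.Path.nil.cons e₂).comp ((Quiver.Path.nil.cons g₂).comp r)
            = ((Quiver.Path.nil.cons e₂).cons g₂).comp r := by
          rw [← Quiver.Path.comp_assoc]; rfl
        have A : E ((Quiver.Path.nil.cons e₁).comp p')
            (((Quiver.Path.nil.cons e₁).cons g₁).comp r) := by
          rw [← assoc₁]; exact hpre _ _ _ h1
        have B : E (((Quiver.Path.nil.cons e₁).cons g₁).comp r)
            (((Quiver.Path.nil.cons e₂).cons g₂).comp r) := hpost _ _ r hd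
        have C : E (((Quiver.Path.nil.cons e₂).cons g₂).comp r)
            ((Quiver.Path.nil.cons e₂).comp q') := by
          rw [← assoc₂]; exact hpre _ _ _ h2
        rw [hp', hq']
        exact htrans _ _ _ (htrans _ _ _ A B) C
  intro a b p q
  exact main p.length a b p q rfl
end

section
/- Jointly epimorphic legs are preserved and reflected through cospan composition when the first leg is surjective: let f : A → S, g : B → S and f' : B → S', g' : C → S' be functions between sets, and form the pushout S'' of g and f' with induced maps h : S → S'' and h' : S' → S''. If f is surjective, then (h ∘ f and h' ∘ g' are jointly surjective) if and only if (f' and g' are jointly surjective). -/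
/-- The relation generating the pushout of `g : B → S` and `f' : B → S'`. -/
def PushoutRel {B S S' : Type*} (g : B → S) (f' : B → S') :
    (S ⊕ S') → (S ⊕ S') → Prop :=
  fun x y => ∃ b : B, x = Sum.inl (g b) ∧ y = Sum.inr (f' b)

/-- The pushout of two functions of sets. -/
def Pushout {B S S' : Type*} (g : B → S) (f' : B → S') : Type _ :=
  Quot (PushoutRel g f')

/-- First structure map of the pushout. -/
def pushoutInl {B S S' : Type*} (g : B → S) (f' : B → S') :
    S → Pushout g f' := fun s => Quot.mk _ (Sum.inl s)

/-- Second structure map of the pushout. -/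
def pushoutInr {B S S' : Type*} (g : B → S) (f' : B → S') :
    S' → Pushout g f' := fun s => Quot.mk _ (Sum.inr s)

/-- If `f : A → S` is surjective, then `h ∘ f` and `h' ∘ g'` are jointly
surjective onto the pushout iff `f'` and `g'` are jointly surjective onto `S'`. -/
theorem stmt_13 {A B C S S' : Type*}
    (f : A → S) (g : B → S) (f' : B → S') (g' : C → S')
    (hf : Function.Surjective f) :
    ((∀ z : Pushout g f',
        (∃ a, pushoutInl g f' (f a) = z) ∨ ∃ c, pushoutInr g f' (g' c) = z) ↔
      (∀ s' : S', (∃ b, f' b = s') ∨ ∃ c, g' c = s')) := by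
  constructor
  · intro H s'
    -- invariant predicate on the pushout
    let Q : S ⊕ S' → Prop := fun x =>
      Sum.rec (fun _ => True) (fun t => (∃ b, f' b = t) ∨ ∃ c, g' c = t) x
    have hinv : ∀ x y, PushoutRel g f' x y → Q x = Q y := by
      rintro x y ⟨b, rfl, rfl⟩
      simp only [Q]
      exact (propext ⟨fun _ => Or.inl ⟨b, rfl⟩, fun _ => trivial⟩)
    let Ql : Pushout g f' → Prop := Quot.lift Q hinv
    rcases H (pushoutInr g f' s') with ⟨a, ha⟩ | ⟨c, hc⟩
    · have h1 : Ql (pushoutInl g f' (f a)) = Ql (pushoutInr g f' s') :=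
        congrArg Ql ha
      have h2 : Ql (pushoutInl g f' (f a)) := trivial
      rw [h1] at h2
      exact h2
    · have h1 : Ql (pushoutInr g f' (g' c)) = Ql (pushoutInr g f' s') :=
        congrArg Ql hc
      have h2 : Ql (pushoutInr g f' (g' c)) := Or.inr ⟨c, rfl⟩
      rw [h1] at h2
      exact h2
  · intro H z
    induction z using Quot.ind with
    | _ x =>
      cases x with
      | inl s =>
        obtain ⟨a, ha⟩ := hf s
        exact Or.inl ⟨a, by simp [pushoutInl, ha]; rfl⟩
      | inr s' =>
        rcases H s' with ⟨b, hb⟩ | ⟨c, hc⟩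
        · obtain ⟨a, ha⟩ := hf (g b)
          refine Or.inl ⟨a, ?_⟩
          show Quot.mk _ (Sum.inl (f a)) = Quot.mk _ (Sum.inr s')
          rw [ha, ← hb]
          exact Quot.sound ⟨b, rfl, rfl⟩
        · exact Or.inr ⟨c, by simp [pushoutInr, hc]; rfl⟩
end

section
/- If every pair of parallel 3-cells in a confluent 3-precategory becomes equal after post-composition with a common 3-cell, then the localization is coherent. Abstract groupoid version: let C be a category (thought of as the category of 2-cells and rewriting paths) such that (confluence) any cospan f : a → b, g : a → c admits f' : b → d, g' : c → d with f ≫ f' = g ≫ g', and (weak coherence) for any parallel f, g : a → b there exists h : b → c with f ≫ h = g ≫ h. Then in the groupoidification (localization at all morphisms) of C, any two parallel morphisms are equal. -/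
/-!
Confluence says that every span `b ← a → c` closes into a commuting square, which is the Ore
condition for the class of all morphisms; weak coherence is the corresponding cancellability
condition. So all morphisms admit a left calculus of fractions, and every morphism of the
localization is a left fraction `f ≫ s⁻¹`. Two parallel fractions are brought to a common
denominator by confluence, after which weak coherence equalizes their numerators.
-/

open CategoryTheory

namespace CategoryTheory

def IsConfluent (C : Type*) [Category C] : Prop :=
  ∀ {a b c : C} (f : a ⟶ b) (g : a ⟶ c), ∃ (d : C) (f' : b ⟶ d) (g' : c ⟶ d), f ≫ f' = g ≫ g'

def IsWeaklyCoherent (C : Type*) [Category C] : Prop :=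
  ∀ {a b : C} (f g : a ⟶ b), ∃ (c : C) (h : b ⟶ c), f ≫ h = g ≫ h

variable {C : Type*} [Category C]

lemma hasLeftCalculusOfFractions_top (hconf : IsConfluent C) (hweak : IsWeaklyCoherent C) :
    (⊤ : MorphismProperty C).HasLeftCalculusOfFractions where
  exists_leftFraction _ _ φ :=
    have ⟨_, f', g', fac⟩ := hconf φ.f φ.s
    ⟨MorphismProperty.LeftFraction.mk g' f' trivial, fac⟩
  ext _ _ _ f₁ f₂ _ _ _ :=
    have ⟨c, h, fac⟩ := hweak f₁ f₂
    ⟨c, h, trivial, fac⟩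

lemma leftFractionRel_top (hconf : IsConfluent C) (hweak : IsWeaklyCoherent C) {X Y : C}
    (φ ψ : (⊤ : MorphismProperty C).LeftFraction X Y) : MorphismProperty.LeftFractionRel φ ψ := by
  obtain ⟨_, u, v, hden⟩ := hconf φ.s ψ.s
  obtain ⟨e, h, hnum⟩ := hweak (φ.f ≫ u) (ψ.f ≫ v)
  refine ⟨e, u ≫ h, v ≫ h, ?_, ?_, trivial⟩
  · simp only [← Category.assoc, hden]
  · simpa only [Category.assoc] using hnum

lemma Localization.hom_eq_of_isConfluent {D : Type*} [Category D] (L : C ⥤ D)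
    [L.IsLocalization ⊤] (hconf : IsConfluent C) (hweak : IsWeaklyCoherent C) {X Y : C}
    (f g : L.obj X ⟶ L.obj Y) : f = g := by
  have := hasLeftCalculusOfFractions_top hconf hweak
  obtain ⟨φ, rfl⟩ := Localization.exists_leftFraction L ⊤ f
  obtain ⟨ψ, rfl⟩ := Localization.exists_leftFraction L ⊤ g
  exact (MorphismProperty.LeftFraction.map_eq_iff L ⊤ φ ψ).2 (leftFractionRel_top hconf hweak φ ψ)

end CategoryTheory

/-- If a category is confluent (every cospan completes to a commuting square)
and weakly coherent (parallel morphisms are equalized by post-composition),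
then its localization at all morphisms is coherent: any two parallel morphisms
of the localization are equal. -/
theorem stmt_17 {C : Type*} [Category C]
    (hconf : ∀ {a b c : C} (f : a ⟶ b) (g : a ⟶ c),
      ∃ (d : C) (f' : b ⟶ d) (g' : c ⟶ d), f ≫ f' = g ≫ g')
    (hweak : ∀ {a b : C} (f g : a ⟶ b),
      ∃ (c : C) (h : b ⟶ c), f ≫ h = g ≫ h) :
    ∀ (x y : (⊤ : MorphismProperty C).Localization) (f g : x ⟶ y), f = g := by
  intro x y
  obtain ⟨x, rfl⟩ := (Localization.Construction.objEquiv (⊤ : MorphismProperty C)).surjective x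
  obtain ⟨y, rfl⟩ := (Localization.Construction.objEquiv (⊤ : MorphismProperty C)).surjective y
  exact Localization.hom_eq_of_isConfluent (⊤ : MorphismProperty C).Q hconf hweak
end

section
/- In a confluent category, every morphism of the localization is a zigzag of length two: if C is a category in which every span f : a → b, g : a → c can be completed to a commuting square f ≫ f' = g ≫ g', then every morphism a → b in the localization C[C⁻¹] equals γ(G) ≫ γ(H)⁻¹ for some object c and morphisms G : a → c, H : b → c of C, where γ : C → C[C⁻¹] is the canonical functor. -/
open CategoryTheory

lemma wInv_eq_inv {C : Type*} [Category C] {X Y : C} (w : X ⟶ Y) :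
    Localization.Construction.wInv w trivial =
      @inv _ _ _ _ ((⊤ : MorphismProperty C).Q.map w)
        ((⊤ : MorphismProperty C).Q_inverts w trivial) := by
  haveI := (⊤ : MorphismProperty C).Q_inverts w trivial
  exact IsIso.eq_inv_of_hom_inv_id
    (Localization.Construction.wIso w trivial).hom_inv_id

/-- Church–Rosser property for confluent categories: in the localization of a
confluent category at all its morphisms, every morphism `γ(a) ⟶ γ(b)` can be
written as `γ(G) ≫ γ(H)⁻¹` for some cospan `G : a ⟶ c`, `H : b ⟶ c` in `C`. -/
theorem stmt_18 {C : Type*} [Category C]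
    (hconf : ∀ {a b c : C} (f : a ⟶ b) (g : a ⟶ c),
      ∃ (d : C) (f' : b ⟶ d) (g' : c ⟶ d), f ≫ f' = g ≫ g')
    (a b : C)
    (φ : (⊤ : MorphismProperty C).Q.obj a ⟶ (⊤ : MorphismProperty C).Q.obj b) :
    ∃ (c : C) (G : a ⟶ c) (H : b ⟶ c),
      φ = (⊤ : MorphismProperty C).Q.map G ≫
        Localization.Construction.wInv H trivial := by
  haveI : ∀ {X Y : C} (f : X ⟶ Y), IsIso ((⊤ : MorphismProperty C).Q.map f) :=
    fun f => (⊤ : MorphismProperty C).Q_inverts f trivial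
  let P : MorphismProperty (⊤ : MorphismProperty C).Localization := fun X Y f =>
    ∃ (c : C) (G : X.as.obj ⟶ c) (H : Y.as.obj ⟶ c),
      f = (⊤ : MorphismProperty C).Q.map G ≫ inv ((⊤ : MorphismProperty C).Q.map H)
  haveI : P.IsStableUnderComposition := by
    constructor
    rintro X Y Z f g ⟨c₁, G₁, H₁, rfl⟩ ⟨c₂, G₂, H₂, rfl⟩
    obtain ⟨d, u, v, huv⟩ := hconf H₁ G₂
    refine ⟨d, G₁ ≫ u, H₂ ≫ v, ?_⟩
    have key : inv ((⊤ : MorphismProperty C).Q.map H₁) ≫ (⊤ : MorphismProperty C).Q.map G₂ =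
        (⊤ : MorphismProperty C).Q.map u ≫ inv ((⊤ : MorphismProperty C).Q.map v) := by
      rw [← cancel_mono ((⊤ : MorphismProperty C).Q.map v),
        ← cancel_epi ((⊤ : MorphismProperty C).Q.map H₁)]
      simp [← Functor.map_comp, huv]
    calc ((⊤ : MorphismProperty C).Q.map G₁ ≫ inv ((⊤ : MorphismProperty C).Q.map H₁)) ≫
          (⊤ : MorphismProperty C).Q.map G₂ ≫ inv ((⊤ : MorphismProperty C).Q.map H₂)
        = (⊤ : MorphismProperty C).Q.map G₁ ≫
            (inv ((⊤ : MorphismProperty C).Q.map H₁) ≫ (⊤ : MorphismProperty C).Q.map G₂) ≫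
            inv ((⊤ : MorphismProperty C).Q.map H₂) := by simp
      _ = (⊤ : MorphismProperty C).Q.map G₁ ≫
            ((⊤ : MorphismProperty C).Q.map u ≫ inv ((⊤ : MorphismProperty C).Q.map v)) ≫
            inv ((⊤ : MorphismProperty C).Q.map H₂) := by rw [key]
      _ = (⊤ : MorphismProperty C).Q.map (G₁ ≫ u) ≫
            inv ((⊤ : MorphismProperty C).Q.map (H₂ ≫ v)) := by
          simp [Functor.map_comp]
  have hP : P = ⊤ := by
    apply Localization.Construction.morphismProperty_eq_top P
    · intro X Y f
      refine ⟨Y, f, 𝟙 Y, ?_⟩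
      show (⊤ : MorphismProperty C).Q.map f =
        (⊤ : MorphismProperty C).Q.map f ≫ inv ((⊤ : MorphismProperty C).Q.map (𝟙 Y))
      rw [IsIso.eq_comp_inv, (⊤ : MorphismProperty C).Q.map_id, Category.comp_id]
    · intro X Y w _
      refine ⟨Y, 𝟙 Y, w, ?_⟩
      show Localization.Construction.wInv w trivial =
        (⊤ : MorphismProperty C).Q.map (𝟙 Y) ≫ inv ((⊤ : MorphismProperty C).Q.map w)
      rw [wInv_eq_inv, (⊤ : MorphismProperty C).Q.map_id, Category.id_comp]
  have hφ : P φ := by rw [hP]; trivial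
  obtain ⟨c, G, H, hGH⟩ := hφ
  exact ⟨c, G, H, hGH.trans (congrArg _ (wInv_eq_inv H).symm)⟩
end
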